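/- Let A(t) be a solution of the matrix ODE A' = −½(tr(A)² + tr S(A)²)·A + ½[A,[A,Aᵗ]] − (tr A / 2)·[A,Aᵗ] on real m×m matrices. Then d/dt |A|² ≤ 0, with equality at time t if and only if Aᵗ = −A at that time; in particular |A(t)| is nonincreasing and the solution exists for all t ∈ [0,∞). -/

import Mathlib

open Matrix Set

/-- Symmetric part `S(B) = ½(B + Bᵗ)`. -/
noncomputable def symP {m : ℕ} (B : Matrix (Fin m) (Fin m) ℝ) :
    Matrix (Fin m) (Fin m) ℝ := (1/2 : ℝ) • (B + Bᵀ)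

/-- `[B, Bᵗ] = BBᵗ − BᵗB`. -/
def commT {m : ℕ} (B : Matrix (Fin m) (Fin m) ℝ) :
    Matrix (Fin m) (Fin m) ℝ := B * Bᵀ - Bᵀ * B

/-- Right-hand side of the bracket flow ODE
`A' = −½((tr A)² + tr S(A)²)A + ½[A,[A,Aᵗ]] − (tr A/2)[A,Aᵗ]`. -/
noncomputable def bfRHS {m : ℕ} (B : Matrix (Fin m) (Fin m) ℝ) :
    Matrix (Fin m) (Fin m) ℝ :=
  (-(1/2) * ((Matrix.trace B) ^ 2 + Matrix.trace (symP B * symP B))) • B +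
    (1/2 : ℝ) • (B * commT B - commT B * B) - (Matrix.trace B / 2) • commT B

/-- The derivative of `|A|²` along the flow. -/
noncomputable def bfNormDeriv {m : ℕ} (B : Matrix (Fin m) (Fin m) ℝ) : ℝ :=
  -(((Matrix.trace B) ^ 2 + Matrix.trace (symP B * symP B)) * Matrix.trace (B * Bᵀ)) -
    Matrix.trace (commT B * (commT B)ᵀ)

/-!
Along the flow `d/dt tr(AAᵀ) = 2 tr(A'Aᵀ)`, and the identities `tr([A,Aᵀ]Aᵀ) = 0` and
`tr([A,[A,Aᵀ]]Aᵀ) = −|[A,Aᵀ]|²` turn this into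
`−((tr A)² + |S(A)|²)|A|² − |[A,Aᵀ]|²`, a sum of nonpositive terms. It vanishes iff
`S(A) = 0` or `A = 0`, and `S(A) = 0` already forces `tr A = 0` and `[A,Aᵀ] = 0`.

For global existence, multiply the polynomial vector field by a bump function equal to `1` on
the Frobenius ball of radius `|A₀| + 1`. The cut-off field is bounded and globally Lipschitz,
so Picard–Lindelöf on each `[0, n]` together with uniqueness gives a solution on `[0, ∞)`.
The cut-off only rescales the field by a nonnegative factor, so `|A|` still decreases along
this solution, which therefore stays where the cut-off is `1` and solves the original equation.
-/

open scoped NNReal Topology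

section TraceMulTranspose

variable {m n : Type*} [Fintype m] [Fintype n]

lemma trace_mul_transpose_eq_sum (X Y : Matrix m n ℝ) :
    trace (X * Yᵀ) = ∑ i, ∑ j, X i j * Y i j := by
  simp [Matrix.trace, Matrix.mul_apply]

lemma trace_mul_transpose_self_nonneg (X : Matrix m n ℝ) : 0 ≤ trace (X * Xᵀ) := by
  rw [trace_mul_transpose_eq_sum]
  exact Finset.sum_nonneg fun i _ => Finset.sum_nonneg fun j _ => mul_self_nonneg _

lemma trace_mul_transpose_self_eq_zero_iff {X : Matrix m n ℝ} :
    trace (X * Xᵀ) = 0 ↔ X = 0 := by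
  simpa using trace_mul_conjTranspose_self_eq_zero_iff (A := X)

lemma hasDerivWithinAt_trace_mul_transpose_self {A : ℝ → Matrix m n ℝ} {V : Matrix m n ℝ}
    {s : Set ℝ} {t : ℝ} (h : ∀ i j, HasDerivWithinAt (fun u => A u i j) (V i j) s t) :
    HasDerivWithinAt (fun u => trace (A u * (A u)ᵀ)) (2 * trace (V * (A t)ᵀ)) s t := by
  simp only [trace_mul_transpose_eq_sum, Finset.mul_sum]
  exact HasDerivWithinAt.fun_sum fun i _ => HasDerivWithinAt.fun_sum fun j _ =>
    ((h i j).mul (h i j)).congr_deriv (by ring)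

lemma antitoneOn_trace_mul_transpose_self {A V : ℝ → Matrix m n ℝ} {D : Set ℝ}
    (hD : Convex ℝ D)
    (hA : ∀ t ∈ D, ∀ i j, HasDerivWithinAt (fun u => A u i j) (V t i j) D t)
    (hV : ∀ t ∈ D, trace (V t * (A t)ᵀ) ≤ 0) :
    AntitoneOn (fun t => trace (A t * (A t)ᵀ)) D := by
  have hderiv t (ht : t ∈ D) := hasDerivWithinAt_trace_mul_transpose_self (hA t ht)
  refine antitoneOn_of_hasDerivWithinAt_nonpos hD (fun t ht => (hderiv t ht).continuousWithinAt)
    (fun t ht => (hderiv t (interior_subset ht)).mono interior_subset) fun t ht => ?_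
  linarith [hV t (interior_subset ht)]

end TraceMulTranspose

section BracketFlowAlgebra

variable {m : ℕ}

lemma transpose_commT (B : Matrix (Fin m) (Fin m) ℝ) : (commT B)ᵀ = commT B := by
  simp [commT]

lemma transpose_symP (B : Matrix (Fin m) (Fin m) ℝ) : (symP B)ᵀ = symP B := by
  simp [symP, add_comm]

lemma symP_eq_zero_iff {B : Matrix (Fin m) (Fin m) ℝ} : symP B = 0 ↔ Bᵀ = -B := by
  rw [symP, smul_eq_zero, add_eq_zero_iff_eq_neg']
  norm_num

lemma trace_commT_mul_transpose (B : Matrix (Fin m) (Fin m) ℝ) :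
    trace (commT B * Bᵀ) = 0 := by
  rw [commT, Matrix.sub_mul, trace_sub, Matrix.mul_assoc Bᵀ, trace_mul_comm Bᵀ, sub_self]

lemma trace_lie_commT_mul_transpose (B : Matrix (Fin m) (Fin m) ℝ) :
    trace ((B * commT B - commT B * B) * Bᵀ) = -trace (commT B * (commT B)ᵀ) := by
  have h₁ : trace (B * commT B * Bᵀ) = trace (Bᵀ * B * commT B) := by
    rw [trace_mul_comm, ← Matrix.mul_assoc]
  have h₂ : trace (commT B * B * Bᵀ) = trace (B * Bᵀ * commT B) := by
    rw [Matrix.mul_assoc, trace_mul_comm]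
  rw [transpose_commT, Matrix.sub_mul, trace_sub, h₁, h₂, ← trace_sub, ← Matrix.sub_mul,
    ← neg_sub, commT, Matrix.neg_mul, trace_neg]

lemma bfNormDeriv_eq_two_mul_trace (B : Matrix (Fin m) (Fin m) ℝ) :
    bfNormDeriv B = 2 * trace (bfRHS B * Bᵀ) := by
  rw [bfRHS, bfNormDeriv, Matrix.sub_mul, Matrix.add_mul, Matrix.smul_mul, Matrix.smul_mul,
    Matrix.smul_mul, trace_sub, trace_add, trace_smul, trace_smul, trace_smul,
    trace_commT_mul_transpose, trace_lie_commT_mul_transpose, smul_eq_mul, smul_eq_mul,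
    smul_eq_mul]
  ring

lemma bfNormDeriv_nonpos (B : Matrix (Fin m) (Fin m) ℝ) : bfNormDeriv B ≤ 0 := by
  have hS := trace_mul_transpose_self_nonneg (symP B)
  rw [transpose_symP] at hS
  have hprod :=
    mul_nonneg (add_nonneg (sq_nonneg (trace B)) hS) (trace_mul_transpose_self_nonneg B)
  rw [bfNormDeriv]
  linarith [trace_mul_transpose_self_nonneg (commT B)]

lemma bfNormDeriv_eq_zero_iff (B : Matrix (Fin m) (Fin m) ℝ) :
    bfNormDeriv B = 0 ↔ Bᵀ = -B := by
  rw [← symP_eq_zero_iff]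
  have hS := trace_mul_transpose_self_nonneg (symP B)
  have hB := trace_mul_transpose_self_nonneg B
  rw [transpose_symP] at hS
  constructor
  · intro h
    rw [bfNormDeriv] at h
    have hSB : trace (symP B * symP B) * trace (B * Bᵀ) = 0 := by
      nlinarith [mul_nonneg (sq_nonneg (trace B)) hB, mul_nonneg hS hB,
        trace_mul_transpose_self_nonneg (commT B)]
    rcases mul_eq_zero.mp hSB with hSB | hSB
    · rwa [← trace_mul_transpose_self_eq_zero_iff, transpose_symP]
    · rw [trace_mul_transpose_self_eq_zero_iff.mp hSB, symP]
      simp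
  · intro h
    have hskew : Bᵀ = -B := symP_eq_zero_iff.mp h
    have htrace : trace B = 0 := by
      have := trace_transpose B
      rw [hskew, trace_neg] at this
      linarith
    have hcomm : commT B = 0 := by simp [commT, hskew]
    simp [bfNormDeriv, h, htrace, hcomm]

lemma trace_bfRHS_mul_transpose_nonpos (B : Matrix (Fin m) (Fin m) ℝ) :
    trace (bfRHS B * Bᵀ) ≤ 0 := by
  linarith [bfNormDeriv_nonpos B, bfNormDeriv_eq_two_mul_trace B]

end BracketFlowAlgebra

section GlobalSolution

variable {E : Type*} [NormedAddCommGroup E] [NormedSpace ℝ E] [CompleteSpace E]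

lemma exists_forall_mem_Icc_hasDerivWithinAt_of_lipschitzWith_of_norm_le
    {v : E → E} {K C : ℝ≥0} (hv : LipschitzWith K v) (hC : ∀ x, ‖v x‖ ≤ C)
    (x₀ : E) (T : ℝ≥0) :
    ∃ γ : ℝ → E, γ 0 = x₀ ∧
      ∀ t ∈ Icc (0 : ℝ) T, HasDerivWithinAt γ (v (γ t)) (Icc 0 T) t :=
  IsPicardLindelof.exists_eq_forall_mem_Icc_hasDerivWithinAt₀ (f := fun _ => v)
    (t₀ := ⟨0, le_rfl, T.2⟩) (x₀ := x₀) (a := C * T) (L := C) (K := K)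
    { lipschitzOnWith := fun _ _ => hv.lipschitzOnWith
      continuousOn := fun _ _ => continuousOn_const
      norm_le := fun _ _ x _ => hC x
      mul_max_le := by simp }

theorem exists_forall_mem_Ici_hasDerivWithinAt_of_lipschitzWith_of_norm_le
    {v : E → E} {K C : ℝ≥0} (hv : LipschitzWith K v) (hC : ∀ x, ‖v x‖ ≤ C)
    (x₀ : E) :
    ∃ γ : ℝ → E, γ 0 = x₀ ∧
      ∀ t ∈ Ici (0 : ℝ), HasDerivWithinAt γ (v (γ t)) (Ici 0) t := by
  choose γ hγ₀ hγ using fun n : ℕ =>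
    exists_forall_mem_Icc_hasDerivWithinAt_of_lipschitzWith_of_norm_le hv hC x₀ n
  have hagree (k n : ℕ) : EqOn (γ k) (γ n) (Icc 0 (min k n)) := by
    have hsol (j : ℕ) (hj : min (k : ℝ) n ≤ j) :
        ContinuousOn (γ j) (Icc 0 (min k n)) ∧
          ∀ t ∈ Ico 0 (min (k : ℝ) n), HasDerivWithinAt (γ j) (v (γ j t)) (Ici t) t :=
      ⟨fun t ht => ((hγ j t ⟨ht.1, ht.2.trans hj⟩).continuousWithinAt).mono
          (Icc_subset_Icc le_rfl hj),
        fun t ht => (hγ j t ⟨ht.1, ht.2.le.trans hj⟩).mono_of_mem_nhdsWithin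
          (Icc_mem_nhdsGE_of_mem ⟨ht.1, ht.2.trans_le hj⟩)⟩
    exact ODE_solution_unique (v := fun _ => v) (fun _ => hv)
      (hsol k (min_le_left _ _)).1 (hsol k (min_le_left _ _)).2
      (hsol n (min_le_right _ _)).1 (hsol n (min_le_right _ _)).2 ((hγ₀ k).trans (hγ₀ n).symm)
  have hle (t : ℝ) : t ≤ (⌊t⌋₊ + 1 : ℕ) := by
    push_cast
    exact (Nat.lt_floor_add_one t).le
  refine ⟨fun t => γ (⌊t⌋₊ + 1) t, by simpa using hγ₀ 1, fun t ht => ?_⟩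
  set N := ⌊t⌋₊ + 1
  have htN : t < N := by
    push_cast [N]
    exact Nat.lt_floor_add_one t
  have heq : EqOn (fun s => γ (⌊s⌋₊ + 1) s) (γ N) (Icc 0 N) :=
    fun s hs => hagree _ N ⟨hs.1, le_min (hle s) hs.2⟩
  have hnhds : Icc (0 : ℝ) N ∈ 𝓝[Ici 0] t := by
    rw [← Ici_inter_Iic]
    exact inter_mem_nhdsWithin _ (Iic_mem_nhds htN)
  have hderiv := (hγ N t ⟨ht, htN.le⟩).mono_of_mem_nhdsWithin hnhds
  rw [← heq ⟨ht, htN.le⟩] at hderiv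
  exact hderiv.congr_of_eventuallyEq (Filter.eventually_of_mem hnhds heq) (heq ⟨ht, htN.le⟩)

end GlobalSolution

section Existence

open scoped Matrix.Norms.Frobenius

lemma frobenius_norm_sq_eq_trace {m n : Type*} [Fintype m] [Fintype n] (X : Matrix m n ℝ) :
    ‖X‖ ^ 2 = trace (X * Xᵀ) := by
  rw [frobenius_norm_def, trace_mul_transpose_eq_sum, ← Real.sqrt_eq_rpow, Real.sq_sqrt
    (Finset.sum_nonneg fun i _ => Finset.sum_nonneg fun j _ => by positivity)]
  simp [sq]

lemma HasDerivWithinAt.matrix_apply {m n : Type*} [Fintype m] [Fintype n]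
    {A : ℝ → Matrix m n ℝ} {V : Matrix m n ℝ} {s : Set ℝ} {t : ℝ}
    (h : HasDerivWithinAt A V s t) (i : m) (j : n) :
    HasDerivWithinAt (fun u => A u i j) (V i j) s t :=
  (Matrix.entryLinearMap ℝ ℝ i j).toContinuousLinearMap.hasFDerivAt.comp_hasDerivWithinAt t h

variable {m : ℕ}

lemma contDiff_bfRHS {n : WithTop ℕ∞} :
    ContDiff ℝ n (bfRHS : Matrix (Fin m) (Fin m) ℝ → _) := by
  have htr : ContDiff ℝ n fun B : Matrix (Fin m) (Fin m) ℝ => Bᵀ :=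
    (Matrix.transposeLinearEquiv (Fin m) (Fin m) ℝ ℝ).toLinearMap.toContinuousLinearMap.contDiff
  have htrace : ContDiff ℝ n fun B : Matrix (Fin m) (Fin m) ℝ => trace B :=
    (Matrix.traceLinearMap (Fin m) ℝ ℝ).toContinuousLinearMap.contDiff
  unfold bfRHS commT symP
  fun_prop

theorem exists_bfRHS_solution (A₀ : Matrix (Fin m) (Fin m) ℝ) :
    ∃ A : ℝ → Matrix (Fin m) (Fin m) ℝ, A 0 = A₀ ∧
      ∀ (i j : Fin m), ∀ t ∈ Ici (0 : ℝ),
        HasDerivWithinAt (fun s => A s i j) (bfRHS (A t) i j) (Ici 0) t := by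
  let φ : ContDiffBump (0 : Matrix (Fin m) (Fin m) ℝ) :=
    ⟨‖A₀‖ + 1, ‖A₀‖ + 2, by positivity, by linarith⟩
  let w X := φ X • bfRHS X
  have hw : ContDiff ℝ 1 w := φ.contDiff.smul contDiff_bfRHS
  have hw_supp : HasCompactSupport w := φ.hasCompactSupport.smul_right
  obtain ⟨K, hK⟩ := hw.lipschitzWith_of_hasCompactSupport hw_supp one_ne_zero
  obtain ⟨C, hC⟩ := hw_supp.exists_bound_of_continuous hw.continuous
  obtain ⟨A, hA₀, hA⟩ := exists_forall_mem_Ici_hasDerivWithinAt_of_lipschitzWith_of_norm_le hK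
    (C := C.toNNReal) (fun X => (hC X).trans (Real.le_coe_toNNReal C)) A₀
  have hw_nonpos X : trace (w X * Xᵀ) ≤ 0 := by
    simp only [w, Matrix.smul_mul, trace_smul, smul_eq_mul]
    exact mul_nonpos_of_nonneg_of_nonpos φ.nonneg (trace_bfRHS_mul_transpose_nonpos X)
  have hanti := antitoneOn_trace_mul_transpose_self (convex_Ici 0)
    (fun t ht i j => (hA t ht).matrix_apply i j) (fun t _ => hw_nonpos (A t))
  have hφ t (ht : t ∈ Ici (0 : ℝ)) : φ (A t) = 1 := by
    apply φ.one_of_mem_closedBall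
    have hsq : ‖A t‖ ^ 2 ≤ ‖A₀‖ ^ 2 := by
      rw [frobenius_norm_sq_eq_trace, frobenius_norm_sq_eq_trace, ← hA₀]
      exact hanti self_mem_Ici ht ht
    rw [mem_closedBall_zero_iff]
    linarith [(pow_le_pow_iff_left₀ (norm_nonneg _) (norm_nonneg _) two_ne_zero).mp hsq]
  refine ⟨A, hA₀, fun i j t ht => ?_⟩
  simpa [w, hφ t ht] using (hA t ht).matrix_apply i j

end Existence

/-- Along any solution of the bracket flow ODE the quantity `|A|²` has derivative
`−((tr A)² + tr S(A)²)|A|² − |[A,Aᵗ]|² ≤ 0`, vanishing exactly when `Aᵗ = −A`; hence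
`|A(t)|` is nonincreasing.  Moreover for any initial matrix there is a solution
defined on all of `[0,∞)`. -/
theorem stmt18 (m : ℕ) (A₀ : Matrix (Fin m) (Fin m) ℝ) :
    (∃ A : ℝ → Matrix (Fin m) (Fin m) ℝ, A 0 = A₀ ∧
      ∀ (i j : Fin m), ∀ t ∈ Ici (0 : ℝ),
        HasDerivWithinAt (fun s => A s i j) (bfRHS (A t) i j) (Ici 0) t) ∧
    (∀ A : ℝ → Matrix (Fin m) (Fin m) ℝ,
      (∀ (i j : Fin m), ∀ t ∈ Ici (0 : ℝ),
        HasDerivWithinAt (fun s => A s i j) (bfRHS (A t) i j) (Ici 0) t) →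
      (∀ t ∈ Ici (0 : ℝ),
        HasDerivWithinAt (fun s => Matrix.trace (A s * (A s)ᵀ)) (bfNormDeriv (A t))
          (Ici 0) t ∧
        bfNormDeriv (A t) ≤ 0 ∧
        (bfNormDeriv (A t) = 0 ↔ (A t)ᵀ = -(A t))) ∧
      AntitoneOn (fun t => Matrix.trace (A t * (A t)ᵀ)) (Ici 0)) := by
  refine ⟨exists_bfRHS_solution A₀, fun A hA =>
    ⟨fun t ht => ⟨?_, bfNormDeriv_nonpos _, bfNormDeriv_eq_zero_iff _⟩, ?_⟩⟩
  · rw [bfNormDeriv_eq_two_mul_trace]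
    exact hasDerivWithinAt_trace_mul_transpose_self fun i j => hA i j t ht
  · exact antitoneOn_trace_mul_transpose_self (convex_Ici 0) (fun t ht i j => hA i j t ht)
      fun t _ => trace_bfRHS_mul_transpose_nonpos _
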